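/- Let n, m, ℓ be nonnegative integers. Then 2F1(-ℓ, -n-ℓ; -m-n-2ℓ; z) = (1-z)^{-m} · 2F1(-m-ℓ, -n-m-ℓ; -n-m-2ℓ; z), as an identity of rational functions of z. -/

import Mathlib

open Finset

noncomputable def poch (x : ℂ) (k : ℕ) : ℂ := (ascPochhammer ℂ k).eval x

/-- Terminating Gauss hypergeometric series `2F1(-n, b; c; z)` as a finite sum. -/
noncomputable def hyp (n : ℕ) (b c : ℂ) (z : ℂ) : ℂ :=
  ∑ k ∈ Finset.range (n + 1),
    poch (-(n : ℂ)) k * poch b k / (poch c k * (Nat.factorial k : ℂ)) * z ^ k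

/-!
Both sides are rewritten by the Pfaff transformation of a terminating series,
`2F1(-N, b; c; z) = ∑ₖ C(N,k) (c-b)ₖ/(c)ₖ zᵏ (1-z)^(N-k)`, which follows by expanding
`(1-z)^(N-k)` and summing each coefficient of `zʲ` with the Chu–Vandermonde identity.
With `c = -(m+n+2ℓ)` the parameter `c - b` is `-(m+ℓ)` on the left and `-ℓ` on the right, and
`C(ℓ,k) (-(m+ℓ))ₖ = C(m+ℓ,k) (-ℓ)ₖ`, so the two expansions agree term by term up to the
factor `(1-z)^m`.
-/

open Polynomial
open scoped Nat

section ChuVandermonde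

variable {R : Type*} [CommRing R]

theorem descPochhammer_eval_add (x y : R) (n : ℕ) :
    (descPochhammer R n).eval (x + y) = ∑ ij ∈ antidiagonal n,
      n.choose ij.1 * ((descPochhammer R ij.1).eval x * (descPochhammer R ij.2).eval y) := by
  simpa only [← aeval_eq_smeval, aeval_def, ← eval_map, descPochhammer_map]
    using Ring.descPochhammer_smeval_add n (Commute.all x y)

theorem ascPochhammer_eval_eq_sum_choose (b c : R) (j : ℕ) :
    (ascPochhammer R j).eval b = ∑ k ∈ range (j + 1), (-1) ^ k * j.choose k *
      (ascPochhammer R k).eval (c - b) * (ascPochhammer R (j - k)).eval (c + k) := by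
  have hshift : (ascPochhammer R j).eval b = (descPochhammer R j).eval (b - c + (c + j - 1)) := by
    rw [descPochhammer_eval_eq_ascPochhammer]
    congr 1
    ring
  rw [hshift, descPochhammer_eval_add, Nat.sum_antidiagonal_eq_sum_range_succ
    (fun i k => (j.choose i : R) * ((descPochhammer R i).eval (b - c) *
      (descPochhammer R k).eval (c + j - 1)))]
  refine sum_congr rfl fun k hk => ?_
  have hneg : (descPochhammer R k).eval (b - c) = (-1) ^ k * (ascPochhammer R k).eval (c - b) := by
    rw [← neg_sub b c, ascPochhammer_eval_neg_eq_descPochhammer, ← mul_assoc, ← mul_pow]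
    simp
  rw [hneg, descPochhammer_eval_eq_ascPochhammer,
    Nat.cast_sub (Nat.lt_succ_iff.mp (mem_range.mp hk)),
    show c + j - 1 - (j - k) + 1 = c + k by ring]
  ring

end ChuVandermonde

lemma poch_add (c : ℂ) (k i : ℕ) : poch c (k + i) = poch c k * poch (c + k) i := by
  simpa [poch] using congrArg (eval c) (ascPochhammer_mul ℂ k i) |>.symm

lemma poch_ne_zero_of_le {c : ℂ} {j N : ℕ} (hc : poch c N ≠ 0) (hj : j ≤ N) :
    poch c j ≠ 0 := by
  obtain ⟨i, rfl⟩ := Nat.exists_eq_add_of_le hj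
  exact left_ne_zero_of_mul (poch_add c j i ▸ hc)

lemma poch_neg_natCast (N k : ℕ) : poch (-N) k = (-1) ^ k * N.descFactorial k := by
  rw [poch, ascPochhammer_eval_neg_eq_descPochhammer, descPochhammer_eval_eq_descFactorial]

lemma poch_neg_natCast_ne_zero {N k : ℕ} (h : k ≤ N) : poch (-N) k ≠ 0 := by
  rw [poch_neg_natCast]
  exact mul_ne_zero (pow_ne_zero _ (by norm_num))
    (Nat.cast_ne_zero.mpr (Nat.descFactorial_eq_zero_iff_lt.not.mpr (by omega)))

lemma poch_neg_natCast_eq_choose (N k : ℕ) : poch (-N) k = (-1) ^ k * k ! * N.choose k := by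
  rw [poch_neg_natCast, Nat.descFactorial_eq_factorial_mul_choose, Nat.cast_mul, mul_assoc]

lemma choose_mul_poch_neg_comm (a b k : ℕ) :
    a.choose k * poch (-b) k = b.choose k * poch (-a) k := by
  rw [poch_neg_natCast_eq_choose, poch_neg_natCast_eq_choose]
  ring

lemma hyp_eq_sum_choose (N : ℕ) (b c z : ℂ) :
    hyp N b c z = ∑ k ∈ range (N + 1), N.choose k * poch b k / poch c k * (-z) ^ k := by
  refine sum_congr rfl fun k _ => ?_
  have hk : (k ! : ℂ) ≠ 0 := Nat.cast_ne_zero.mpr k.factorial_ne_zero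
  rw [poch_neg_natCast_eq_choose, neg_pow z]
  field_simp

lemma sum_choose_poch_div_poch (b c : ℂ) (j : ℕ) (hc : poch c j ≠ 0) :
    ∑ k ∈ range (j + 1), (-1) ^ k * j.choose k * poch (c - b) k / poch c k =
      poch b j / poch c j := by
  rw [eq_div_iff hc, sum_mul]
  refine (sum_congr rfl fun k hk => ?_).trans (ascPochhammer_eval_eq_sum_choose b c j).symm
  obtain ⟨i, rfl⟩ := Nat.exists_eq_add_of_le (Nat.lt_succ_iff.mp (mem_range.mp hk))
  have hck : poch c k ≠ 0 := poch_ne_zero_of_le hc (Nat.le_add_right k i)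
  rw [poch_add, Nat.add_sub_cancel_left]
  field_simp
  rfl

theorem hyp_eq_sum_mul_one_sub_pow (N : ℕ) (b c z : ℂ) (hc : poch c N ≠ 0) :
    hyp N b c z = ∑ k ∈ range (N + 1),
      N.choose k * poch (c - b) k / poch c k * z ^ k * (1 - z) ^ (N - k) := by
  set a : ℕ → ℂ := fun k => N.choose k * poch (c - b) k / poch c k * (-1) ^ k
  calc hyp N b c z
      = ∑ j ∈ range (N + 1), ∑ k ∈ range (j + 1),
          a k * (N - k).choose (j - k) * (-z) ^ j := by
        rw [hyp_eq_sum_choose]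
        refine sum_congr rfl fun j hj => ?_
        rw [mul_div_assoc, ← sum_choose_poch_div_poch b c j
          (poch_ne_zero_of_le hc (Nat.lt_succ_iff.mp (mem_range.mp hj))), mul_sum, sum_mul]
        refine sum_congr rfl fun k hk => ?_
        have hkj := Nat.lt_succ_iff.mp (mem_range.mp hk)
        have hchoose : (N.choose j * j.choose k : ℂ) = N.choose k * (N - k).choose (j - k) := by
          exact_mod_cast Nat.choose_mul hkj
        simp only [a]
        linear_combination (-1) ^ k * poch (c - b) k / poch c k * (-z) ^ j * hchoose
    _ = ∑ k ∈ range (N + 1), ∑ i ∈ range (N + 1 - k),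
          a k * (N - k).choose i * (-z) ^ (k + i) := by
        rw [← sum_range_diag_flip]
        refine sum_congr rfl fun j _ => sum_congr rfl fun k hk => ?_
        rw [Nat.add_sub_cancel' (Nat.lt_succ_iff.mp (mem_range.mp hk))]
    _ = _ := by
        refine sum_congr rfl fun k hk => ?_
        rw [Nat.sub_add_comm (Nat.lt_succ_iff.mp (mem_range.mp hk)), ← neg_add_eq_sub z 1,
          add_pow, mul_sum]
        have hsign : (-1 : ℂ) ^ k * (-z) ^ k = z ^ k := by rw [← mul_pow, neg_one_mul, neg_neg]
        refine sum_congr rfl fun i _ => ?_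
        rw [pow_add, ← hsign]
        ring

lemma sum_choose_poch_neg_add (d a : ℕ) (c z : ℂ) :
    ∑ k ∈ range (d + a + 1),
        (d + a).choose k * poch (-a) k / poch c k * z ^ k * (1 - z) ^ (d + a - k)
      = (1 - z) ^ d * ∑ k ∈ range (a + 1),
        a.choose k * poch (-(d + a : ℕ)) k / poch c k * z ^ k * (1 - z) ^ (a - k) := by
  rw [mul_sum, ← sum_subset (range_subset_range.mpr (by omega : a + 1 ≤ d + a + 1))]
  · refine sum_congr rfl fun k hk => ?_
    have hka : k ≤ a := Nat.lt_succ_iff.mp (mem_range.mp hk)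
    rw [show d + a - k = d + (a - k) by omega, pow_add, choose_mul_poch_neg_comm]
    ring
  · intro k _ hk
    rw [poch_neg_natCast, Nat.descFactorial_eq_zero_iff_lt.mpr (by simpa using hk)]
    simp

theorem additive_case_euler_transform (n m l : ℕ) (z : ℂ) (hz : z ≠ 1) :
    hyp l (-(n : ℂ) - l) (-(m : ℂ) - n - 2 * l) z =
      (1 - z) ^ (-(m : ℤ)) * hyp (m + l) (-(n : ℂ) - m - l) (-(n : ℂ) - m - 2 * l) z := by
  have hc : ∀ k ≤ m + n + 2 * l, poch (-(m + n + 2 * l : ℕ)) k ≠ 0 :=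
    fun k hk => poch_neg_natCast_ne_zero hk
  rw [show -(m : ℂ) - n - 2 * l = -(m + n + 2 * l : ℕ) by push_cast; ring,
    show -(n : ℂ) - m - 2 * l = -(m + n + 2 * l : ℕ) by push_cast; ring,
    hyp_eq_sum_mul_one_sub_pow _ _ _ _ (hc l (by omega)),
    hyp_eq_sum_mul_one_sub_pow _ _ _ _ (hc (m + l) (by omega)),
    show -((m + n + 2 * l : ℕ) : ℂ) - (-(n : ℂ) - l) = -(m + l : ℕ) by push_cast; ring,
    show -((m + n + 2 * l : ℕ) : ℂ) - (-(n : ℂ) - m - l) = -(l : ℕ) by push_cast; ring,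
    sum_choose_poch_neg_add, ← mul_assoc, zpow_neg, zpow_natCast,
    inv_mul_cancel₀ (pow_ne_zero _ (sub_ne_zero.mpr hz.symm)), one_mul]
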